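/- In the operad of framed Drinfeld–Kohno Lie algebras, the partial composition satisfies t_{ii} ∘ₖ 0 = t_{ii} for k > i, t_{ii} ∘ₖ 0 = t_{i+n−1, i+n−1} for k < i, and t_{ii} ∘ᵢ 0 = Σ_{p=i}^{i+n−1} t_{pp} + Σ_{i ≤ p < q ≤ i+n−1} t_{pq}, and these assignments define Lie algebra homomorphisms ∘ₖ : 𝔣𝔱ₘ ⊕ 𝔣𝔱ₙ → 𝔣𝔱_{m+n−1} respecting the defining relations of 𝔣𝔱. -/

import Mathlib

open FreeLieAlgebra

/-- Defining relations of the framed Drinfeld–Kohno Lie algebra 𝔣𝔱ₙ (generators out of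
the range `1 ≤ i, j ≤ n` are set to zero). -/
def ftRels (k : Type) [Field k] (n : ℕ) : Set (FreeLieAlgebra k (ℕ × ℕ)) :=
  { x | (∃ i j : ℕ, x = of k (i, j) - of k (j, i)) ∨
        (∃ i j : ℕ, ¬(1 ≤ i ∧ i ≤ n ∧ 1 ≤ j ∧ j ≤ n) ∧ x = of k (i, j)) ∨
        (∃ i j l m : ℕ, i ≠ l ∧ i ≠ m ∧ j ≠ l ∧ j ≠ m ∧ x = ⁅of k (i, j), of k (l, m)⁆) ∨
        (∃ i j l : ℕ, i ≠ j ∧ j ≠ l ∧ i ≠ l ∧ x = ⁅of k (i, j), of k (l, i) + of k (l, j)⁆) ∨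
        (∃ i j l : ℕ, x = ⁅of k (i, i), of k (j, l)⁆) }

noncomputable def ftIdeal (k : Type) [Field k] (n : ℕ) : LieIdeal k (FreeLieAlgebra k (ℕ × ℕ)) :=
  LieSubmodule.lieSpan k _ (ftRels k n)

/-- The framed Drinfeld–Kohno Lie algebra 𝔣𝔱ₙ. -/
abbrev ft (k : Type) [Field k] (n : ℕ) := FreeLieAlgebra k (ℕ × ℕ) ⧸ ftIdeal k n

noncomputable def ftGen (k : Type) [Field k] (n : ℕ) (i j : ℕ) : ft k n :=
  LieSubmodule.Quotient.mk' (ftIdeal k n) (of k (i, j))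

section Helpers

lemma lie_sum' {L : Type*} [LieRing L] {ι : Type*} (x : L) (s : Finset ι) (f : ι → L) :
    ⁅x, ∑ i ∈ s, f i⁆ = ∑ i ∈ s, ⁅x, f i⁆ := by
  classical
  induction s using Finset.induction with
  | empty => simp
  | insert _ _ h ih => rw [Finset.sum_insert h, Finset.sum_insert h, lie_add, ih]

lemma sum_lie' {L : Type*} [LieRing L] {ι : Type*} (s : Finset ι) (f : ι → L) (x : L) :
    ⁅∑ i ∈ s, f i, x⁆ = ∑ i ∈ s, ⁅f i, x⁆ := by
  classical
  induction s using Finset.induction with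
  | empty => simp
  | insert _ _ h ih => rw [Finset.sum_insert h, Finset.sum_insert h, add_lie, ih]

variable {k : Type} [Field k]

/-- Lift a Lie algebra hom through a quotient by an ideal contained in its kernel. -/
noncomputable def lieQLift {L L' : Type} [LieRing L] [LieAlgebra k L] [LieRing L']
    [LieAlgebra k L'] (I : LieIdeal k L) (α : L →ₗ⁅k⁆ L') (h : ∀ x ∈ I, α x = 0) :
    (L ⧸ I) →ₗ⁅k⁆ L' :=
  { Submodule.liftQ (I : Submodule k L) (α : L →ₗ[k] L') (fun x hx => h x hx) with
    map_lie' := by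
      rintro ⟨x⟩ ⟨y⟩
      exact α.map_lie x y }

lemma lieQLift_mk {L L' : Type} [LieRing L] [LieAlgebra k L] [LieRing L']
    [LieAlgebra k L'] (I : LieIdeal k L) (α : L →ₗ⁅k⁆ L') (h : ∀ x ∈ I, α x = 0) (x : L) :
    lieQLift I α h (LieSubmodule.Quotient.mk' I x) = α x := rfl

/-- The left centralizer of an element, as a Lie subalgebra. -/
def centL {L : Type} [LieRing L] [LieAlgebra k L] (z : L) : LieSubalgebra k L where
  carrier := { w | ⁅z, w⁆ = 0 }
  add_mem' := by intro a b ha hb; simp only [Set.mem_setOf_eq] at *; rw [lie_add, ha, hb, add_zero]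
  zero_mem' := by simp
  smul_mem' := by intro t a ha; simp only [Set.mem_setOf_eq] at *; rw [lie_smul, ha, smul_zero]
  lie_mem' := by
    intro a b ha hb; simp only [Set.mem_setOf_eq] at *
    rw [leibniz_lie, ha, hb, zero_lie, lie_zero, add_zero]

/-- The right centralizer of an element, as a Lie subalgebra. -/
def centR {L : Type} [LieRing L] [LieAlgebra k L] (z : L) : LieSubalgebra k L where
  carrier := { w | ⁅w, z⁆ = 0 }
  add_mem' := by intro a b ha hb; simp only [Set.mem_setOf_eq] at *; rw [add_lie, ha, hb, add_zero]
  zero_mem' := by simp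
  smul_mem' := by intro t a ha; simp only [Set.mem_setOf_eq] at *; rw [smul_lie, ha, smul_zero]
  lie_mem' := by
    intro a b ha hb; simp only [Set.mem_setOf_eq] at *
    have hza : ⁅z, a⁆ = 0 := by rw [← lie_skew, ha, neg_zero]
    have hzb : ⁅z, b⁆ = 0 := by rw [← lie_skew, hb, neg_zero]
    rw [← lie_skew, leibniz_lie, hza, hzb, zero_lie, lie_zero, add_zero, neg_zero]

lemma lift_mem_lieSubalgebra {L : Type} [LieRing L] [LieAlgebra k L] {X : Type}
    (A : LieSubalgebra k L) (ψ : X → L) (h : ∀ x, ψ x ∈ A) (v : FreeLieAlgebra k X) :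
    lift k ψ v ∈ A := by
  have hfact : lift k ψ = A.incl.comp (lift k (fun x => (⟨ψ x, h x⟩ : A))) := by
    apply FreeLieAlgebra.hom_ext
    intro x
    simp [lift_of_apply]
  rw [hfact]
  exact (lift k (fun x => (⟨ψ x, h x⟩ : A)) v).2

lemma square_decomp {M : Type*} [AddCommMonoid M] (a b : ℕ) (f : ℕ → ℕ → M)
    (hf : ∀ p q, f p q = f q p) :
    ∑ p ∈ Finset.Icc a b, ∑ q ∈ Finset.Icc a b, f p q
      = ∑ p ∈ Finset.Icc a b, f p p +
        ((∑ p ∈ Finset.Icc a b, ∑ q ∈ Finset.Ioc p b, f p q) +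
         (∑ p ∈ Finset.Icc a b, ∑ q ∈ Finset.Ioc p b, f p q)) := by
  have hIcc : ∀ x y : ℕ, Finset.Icc x y = Finset.Ico x (y+1) := by
    intro x y; rw [Finset.Ico_add_one_right_eq_Icc]
  have hIoc : ∀ x y : ℕ, Finset.Ioc x y = Finset.Ico (x+1) (y+1) := by
    intro x y; rw [Finset.Ico_add_one_right_eq_Icc, Finset.Icc_add_one_left_eq_Ioc]
  simp only [hIcc, hIoc]
  have h1 : ∀ p ∈ Finset.Ico a (b+1),
      ∑ q ∈ Finset.Ico a (b+1), f p q
        = ∑ q ∈ Finset.Ico a (p+1), f p q + ∑ q ∈ Finset.Ico (p+1) (b+1), f p q := by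
    intro p hp
    rw [Finset.mem_Ico] at hp
    rw [Finset.sum_Ico_consecutive _ (by omega) (by omega)]
  rw [Finset.sum_congr rfl h1, Finset.sum_add_distrib]
  have h2 : ∑ p ∈ Finset.Ico a (b+1), ∑ q ∈ Finset.Ico a (p+1), f p q
      = ∑ p ∈ Finset.Ico a (b+1), f p p + ∑ p ∈ Finset.Ico a (b+1),
          ∑ q ∈ Finset.Ico (p+1) (b+1), f p q := by
    have hc := Finset.sum_Ico_Ico_comm a (b+1) (fun i j => f j i)
    have : ∑ p ∈ Finset.Ico a (b+1), ∑ q ∈ Finset.Ico a (p+1), f p q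
        = ∑ i ∈ Finset.Ico a (b+1), ∑ j ∈ Finset.Ico i (b+1), f j i := hc.symm
    rw [this]
    have : ∀ i ∈ Finset.Ico a (b+1), ∑ j ∈ Finset.Ico i (b+1), f j i
        = f i i + ∑ j ∈ Finset.Ico (i+1) (b+1), f i j := by
      intro i hi
      rw [Finset.mem_Ico] at hi
      rw [Finset.sum_eq_sum_Ico_succ_bot (by omega), hf i i]
      congr 1
      exact Finset.sum_congr rfl fun j _ => hf j i
    rw [Finset.sum_congr rfl this, Finset.sum_add_distrib]
  rw [h2, add_assoc]

end Helpers

section Target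

variable (k : Type) [Field k] (Nt : ℕ)

local notation "T" => ftGen k Nt

lemma ft_rel_mk (x : FreeLieAlgebra k (ℕ × ℕ)) (hx : x ∈ ftRels k Nt) :
    LieSubmodule.Quotient.mk' (ftIdeal k Nt) x = 0 :=
  (LieSubmodule.Quotient.mk_eq_zero _).mpr (LieSubmodule.subset_lieSpan hx)

lemma tsymm (i j : ℕ) : T i j = T j i := by
  have h := ft_rel_mk k Nt _ (Or.inl ⟨i, j, rfl⟩)
  exact sub_eq_zero.mp h

lemma trel3 (i j l m : ℕ) (h1 : i ≠ l) (h2 : i ≠ m) (h3 : j ≠ l) (h4 : j ≠ m) :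
    ⁅T i j, T l m⁆ = 0 := by
  exact ft_rel_mk k Nt _ (Or.inr (Or.inr (Or.inl ⟨i, j, l, m, h1, h2, h3, h4, rfl⟩)))

lemma trel4 (i j l : ℕ) (h1 : i ≠ j) (h2 : j ≠ l) (h3 : i ≠ l) :
    ⁅T i j, T l i + T l j⁆ = 0 := by
  exact ft_rel_mk k Nt _ (Or.inr (Or.inr (Or.inr (Or.inl ⟨i, j, l, h1, h2, h3, rfl⟩))))

lemma trel5 (i j l : ℕ) : ⁅T i i, T j l⁆ = 0 := by
  exact ft_rel_mk k Nt _ (Or.inr (Or.inr (Or.inr (Or.inr ⟨i, j, l, rfl⟩))))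

lemma trel5' (i j l : ℕ) : ⁅T j l, T i i⁆ = 0 := by
  rw [← lie_skew, trel5 k Nt i j l, neg_zero]

lemma rowKill (S : Finset ℕ) (p q d : ℕ) (hp : p ∈ S) (hq : q ∈ S) (hd : d ∉ S) :
    ⁅T p q, ∑ a ∈ S, T a d⁆ = 0 := by
  classical
  rcases eq_or_ne p q with rfl | hpq
  · rw [lie_sum']
    exact Finset.sum_eq_zero fun a _ => trel5 k Nt p a d
  · have hpd : p ≠ d := fun h => hd (h ▸ hp)
    have hqd : q ≠ d := fun h => hd (h ▸ hq)
    rw [← Finset.add_sum_erase _ _ hp,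
        ← Finset.add_sum_erase _ _ (Finset.mem_erase.mpr ⟨hpq.symm, hq⟩),
        lie_add, lie_add, lie_sum']
    have hrest : ∑ a ∈ (S.erase p).erase q, ⁅T p q, T a d⁆ = 0 := by
      refine Finset.sum_eq_zero fun a ha => ?_
      rw [Finset.mem_erase, Finset.mem_erase] at ha
      exact trel3 k Nt p q a d (Ne.symm ha.2.1) hpd (Ne.symm ha.1) hqd
    rw [hrest, add_zero, ← lie_add, tsymm k Nt p d, tsymm k Nt q d]
    exact trel4 k Nt p q d hpq hqd hpd

lemma colKill (S : Finset ℕ) (p q d : ℕ) (hp : p ∈ S) (hq : q ∈ S) (hd : d ∉ S) :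
    ⁅∑ a ∈ S, T a d, T p q⁆ = 0 := by
  rw [← lie_skew, rowKill k Nt S p q d hp hq hd, neg_zero]

lemma rowKill2 (S : Finset ℕ) (p c d : ℕ) (hc : c ∈ S) (hd : d ∈ S) (hcd : c ≠ d)
    (hpc : p ≠ c) (hpd : p ≠ d) :
    ⁅∑ q ∈ S, T p q, T c d⁆ = 0 := by
  classical
  rw [← Finset.add_sum_erase _ _ hc,
      ← Finset.add_sum_erase _ _ (Finset.mem_erase.mpr ⟨hcd.symm, hd⟩),
      add_lie, add_lie, sum_lie']
  have hrest : ∑ q ∈ (S.erase c).erase d, ⁅T p q, T c d⁆ = 0 := by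
    refine Finset.sum_eq_zero fun q hq => ?_
    rw [Finset.mem_erase, Finset.mem_erase] at hq
    rcases eq_or_ne p q with rfl | hpq
    · exact trel5 k Nt p c d
    · exact trel3 k Nt p q c d hpc hpd hq.2.1 hq.1
  rw [hrest, add_zero, ← add_lie, ← lie_skew,
    trel4 k Nt c d p hcd (Ne.symm hpd) (Ne.symm hpc), neg_zero]

lemma rowsKill (S : Finset ℕ) (c d : ℕ) (hcd : c ≠ d) :
    ⁅∑ q ∈ S, T c q, T c d⁆ + ⁅∑ q ∈ S, T d q, T c d⁆ = 0 := by
  rw [← add_lie, ← Finset.sum_add_distrib, sum_lie']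
  refine Finset.sum_eq_zero fun q hq => ?_
  rcases eq_or_ne q c with rfl | hqc
  · rw [add_lie, trel5 k Nt q q d, tsymm k Nt d q, lie_self, zero_add]
  rcases eq_or_ne q d with rfl | hqd
  · rw [add_lie, trel5 k Nt q c q, lie_self, zero_add]
  · rw [← lie_skew, tsymm k Nt c q, tsymm k Nt d q,
      trel4 k Nt c d q hcd (Ne.symm hqd) (Ne.symm hqc), neg_zero]

lemma diagKill (S : Finset ℕ) (c d : ℕ) :
    ⁅∑ p ∈ S, T p p, T c d⁆ = 0 := by
  rw [sum_lie']
  exact Finset.sum_eq_zero fun p _ => trel5 k Nt p c d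

lemma QKill (S : Finset ℕ) (c d : ℕ)
    (h : (c ∈ S ∧ d ∈ S) ∨ (c ∉ S ∧ d ∉ S)) :
    ⁅∑ p ∈ S, ∑ q ∈ S, T p q, T c d⁆ = 0 := by
  classical
  rcases h with ⟨hc, hd⟩ | ⟨hc, hd⟩
  · rcases eq_or_ne c d with rfl | hcd
    · rw [sum_lie']
      refine Finset.sum_eq_zero fun p _ => ?_
      rw [sum_lie']
      exact Finset.sum_eq_zero fun q _ => trel5' k Nt c p q
    · rw [← Finset.add_sum_erase _ _ hc,
          ← Finset.add_sum_erase _ _ (Finset.mem_erase.mpr ⟨hcd.symm, hd⟩),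
          add_lie, add_lie]
      have hrest : ⁅∑ p ∈ (S.erase c).erase d, ∑ q ∈ S, T p q, T c d⁆ = 0 := by
        rw [sum_lie']
        refine Finset.sum_eq_zero fun p hp => ?_
        rw [Finset.mem_erase, Finset.mem_erase] at hp
        exact rowKill2 k Nt S p c d hc hd hcd hp.2.1 hp.1
      rw [hrest, add_zero]
      exact rowsKill k Nt S c d hcd
  · rw [sum_lie']
    refine Finset.sum_eq_zero fun p hp => ?_
    rw [sum_lie']
    refine Finset.sum_eq_zero fun q hq => ?_
    have hpc : p ≠ c := fun h => hc (h ▸ hp)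
    have hpd : p ≠ d := fun h => hd (h ▸ hp)
    have hqc : q ≠ c := fun h => hc (h ▸ hq)
    have hqd : q ≠ d := fun h => hd (h ▸ hq)
    rcases eq_or_ne p q with rfl | hpq
    · exact trel5 k Nt p c d
    · exact trel3 k Nt p q c d hpc hpd hqc hqd

lemma PKill [CharZero k] (a b c d : ℕ)
    (h : (c ∈ Finset.Icc a b ∧ d ∈ Finset.Icc a b) ∨
         (c ∉ Finset.Icc a b ∧ d ∉ Finset.Icc a b)) :
    ⁅∑ p ∈ Finset.Icc a b, ∑ q ∈ Finset.Ioc p b, T p q, T c d⁆ = 0 := by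
  have hQ := QKill k Nt (Finset.Icc a b) c d h
  rw [square_decomp a b (fun p q => T p q) (tsymm k Nt), add_lie, add_lie,
    diagKill k Nt _ c d, zero_add] at hQ
  have h2 : (2 : k) • ⁅∑ p ∈ Finset.Icc a b, ∑ q ∈ Finset.Ioc p b, T p q, T c d⁆ = 0 := by
    rw [two_smul]; exact hQ
  rcases smul_eq_zero.mp h2 with h3 | h3
  · exact absurd h3 two_ne_zero
  · exact h3

lemma DKill [CharZero k] (a b c d : ℕ)
    (h : (c ∈ Finset.Icc a b ∧ d ∈ Finset.Icc a b) ∨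
         (c ∉ Finset.Icc a b ∧ d ∉ Finset.Icc a b)) :
    ⁅(∑ p ∈ Finset.Icc a b, T p p) +
      ∑ p ∈ Finset.Icc a b, ∑ q ∈ Finset.Ioc p b, T p q, T c d⁆ = 0 := by
  rw [add_lie, diagKill, PKill k Nt a b c d h, add_zero]

lemma DrowKill (a b d : ℕ) (hd : d ∉ Finset.Icc a b) :
    ⁅(∑ p ∈ Finset.Icc a b, T p p) +
      ∑ p ∈ Finset.Icc a b, ∑ q ∈ Finset.Ioc p b, T p q,
      ∑ x ∈ Finset.Icc a b, T x d⁆ = 0 := by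
  rw [add_lie]
  have h1 : ⁅∑ p ∈ Finset.Icc a b, T p p, ∑ x ∈ Finset.Icc a b, T x d⁆ = 0 := by
    rw [sum_lie']
    exact Finset.sum_eq_zero fun p hp => rowKill k Nt _ p p d hp hp hd
  have h2 : ⁅∑ p ∈ Finset.Icc a b, ∑ q ∈ Finset.Ioc p b, T p q,
      ∑ x ∈ Finset.Icc a b, T x d⁆ = 0 := by
    rw [sum_lie']
    refine Finset.sum_eq_zero fun p hp => ?_
    rw [sum_lie']
    refine Finset.sum_eq_zero fun q hq => ?_
    rw [Finset.mem_Icc] at hp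
    rw [Finset.mem_Ioc] at hq
    exact rowKill k Nt _ p q d (Finset.mem_Icc.mpr hp)
      (Finset.mem_Icc.mpr ⟨by omega, hq.2⟩) hd
  rw [h1, h2, add_zero]


end Target

section Comp

variable (k : Type) [Field k] (Nt n kk : ℕ)

def sigmaIdx (p : ℕ) : ℕ := if p < kk then p else p + n - 1

def EIdx (p : ℕ) : Finset ℕ := if p = kk then Finset.Icc kk (kk + n - 1) else {sigmaIdx n kk p}

noncomputable def DElt : ft k Nt :=
  (∑ p ∈ Finset.Icc kk (kk + n - 1), ftGen k Nt p p) +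
    ∑ p ∈ Finset.Icc kk (kk + n - 1), ∑ q ∈ Finset.Ioc p (kk + n - 1), ftGen k Nt p q

noncomputable def GElt (i j : ℕ) : ft k Nt :=
  ∑ p ∈ EIdx n kk i, ∑ q ∈ EIdx n kk j, ftGen k Nt p q

noncomputable def phiF (m : ℕ) : ℕ × ℕ → ft k Nt := fun x =>
  if 1 ≤ x.1 ∧ x.1 ≤ m ∧ 1 ≤ x.2 ∧ x.2 ≤ m then
    (if x.1 = kk ∧ x.2 = kk then DElt k Nt n kk else GElt k Nt n kk x.1 x.2)
  else 0

noncomputable def psiF (n' : ℕ) : ℕ × ℕ → ft k Nt := fun x =>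
  if 1 ≤ x.1 ∧ x.1 ≤ n' ∧ 1 ≤ x.2 ∧ x.2 ≤ n' then
    ftGen k Nt (x.1 + kk - 1) (x.2 + kk - 1)
  else 0

variable {n kk}

lemma mem_EIdx (hn : 1 ≤ n) {p a : ℕ} :
    a ∈ EIdx n kk p ↔ (p = kk ∧ kk ≤ a ∧ a ≤ kk + n - 1) ∨ (p ≠ kk ∧ a = sigmaIdx n kk p) := by
  unfold EIdx
  split_ifs with h
  · simp [h, Finset.mem_Icc]
  · simp [h, Finset.mem_singleton]

lemma EIdx_ne (hn : 1 ≤ n) {i j a b : ℕ} (hij : i ≠ j)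
    (ha : a ∈ EIdx n kk i) (hb : b ∈ EIdx n kk j) : a ≠ b := by
  rw [mem_EIdx hn] at ha hb
  rcases ha with ⟨hi, h1, h2⟩ | ⟨hi, rfl⟩ <;> rcases hb with ⟨hj, h3, h4⟩ | ⟨hj, rfl⟩ <;>
    (try unfold sigmaIdx) <;> (try split_ifs) <;> omega

lemma sigma_not_mem (hn : 1 ≤ n) {p : ℕ} (hp : p ≠ kk) :
    sigmaIdx n kk p ∉ Finset.Icc kk (kk + n - 1) := by
  unfold sigmaIdx
  rw [Finset.mem_Icc]
  split_ifs <;> omega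

lemma mem_EIdx_not_mem (hn : 1 ≤ n) {p a : ℕ} (hp : p ≠ kk) (ha : a ∈ EIdx n kk p) :
    a ∉ Finset.Icc kk (kk + n - 1) := by
  rw [mem_EIdx hn] at ha
  rcases ha with ⟨h, _⟩ | ⟨_, rfl⟩
  · exact absurd h hp
  · exact sigma_not_mem hn hp

lemma GElt_symm (i j : ℕ) : GElt k Nt n kk i j = GElt k Nt n kk j i := by
  unfold GElt
  rw [Finset.sum_comm]
  exact Finset.sum_congr rfl fun q _ => Finset.sum_congr rfl fun p _ => tsymm k Nt p q

lemma GG3 (hn : 1 ≤ n) {i j l m : ℕ} (h1 : i ≠ l) (h2 : i ≠ m) (h3 : j ≠ l) (h4 : j ≠ m) :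
    ⁅GElt k Nt n kk i j, GElt k Nt n kk l m⁆ = 0 := by
  unfold GElt
  rw [sum_lie']
  refine Finset.sum_eq_zero fun p hp => ?_
  rw [sum_lie']
  refine Finset.sum_eq_zero fun q hq => ?_
  rw [lie_sum']
  refine Finset.sum_eq_zero fun r hr => ?_
  rw [lie_sum']
  refine Finset.sum_eq_zero fun s hs => ?_
  exact trel3 k Nt p q r s (EIdx_ne hn h1 hp hr) (EIdx_ne hn h2 hp hs)
    (EIdx_ne hn h3 hq hr) (EIdx_ne hn h4 hq hs)

lemma G4 (hn : 1 ≤ n) {i j l : ℕ} (hij : i ≠ j) (hjl : j ≠ l) (hil : i ≠ l) :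
    ⁅GElt k Nt n kk i j, GElt k Nt n kk l i + GElt k Nt n kk l j⁆ = 0 := by
  classical
  unfold GElt
  rw [sum_lie']
  refine Finset.sum_eq_zero fun p hp => ?_
  rw [sum_lie']
  refine Finset.sum_eq_zero fun q hq => ?_
  rw [← Finset.sum_add_distrib, lie_sum']
  refine Finset.sum_eq_zero fun r hr => ?_
  have hrp : r ≠ p := EIdx_ne hn hil.symm hr hp
  have hrq : r ≠ q := EIdx_ne hn hjl.symm hr hq
  rw [← Finset.add_sum_erase _ _ hp, ← Finset.add_sum_erase _ _ hq]
  have hA : ⁅ftGen k Nt p q, ∑ s ∈ (EIdx n kk i).erase p, ftGen k Nt r s⁆ = 0 := by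
    rw [lie_sum']
    refine Finset.sum_eq_zero fun s hs => ?_
    rw [Finset.mem_erase] at hs
    exact trel3 k Nt p q r s hrp.symm (Ne.symm hs.1) hrq.symm (EIdx_ne hn hij.symm hq hs.2)
  have hB : ⁅ftGen k Nt p q, ∑ s ∈ (EIdx n kk j).erase q, ftGen k Nt r s⁆ = 0 := by
    rw [lie_sum']
    refine Finset.sum_eq_zero fun s hs => ?_
    rw [Finset.mem_erase] at hs
    exact trel3 k Nt p q r s hrp.symm (EIdx_ne hn hij hp hs.2) hrq.symm (Ne.symm hs.1)
  rw [lie_add, lie_add, lie_add, hA, hB, add_zero, add_zero, ← lie_add]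
  exact trel4 k Nt p q r (EIdx_ne hn hij hp hq) hrq.symm hrp.symm

end Comp

section Comp2

variable (k : Type) [Field k] (Nt : ℕ) {n kk : ℕ}

lemma sigma_lt {p : ℕ} (h : p < kk) : sigmaIdx n kk p = p := if_pos h

lemma sigma_ge {p : ℕ} (h : ¬ p < kk) : sigmaIdx n kk p = p + n - 1 := if_neg h

lemma Gsingle {i j : ℕ} (hi : i ≠ kk) (hj : j ≠ kk) :
    GElt k Nt n kk i j = ftGen k Nt (sigmaIdx n kk i) (sigmaIdx n kk j) := by
  unfold GElt EIdx
  rw [if_neg hi, if_neg hj, Finset.sum_singleton, Finset.sum_singleton]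

lemma Grow {j : ℕ} (hj : j ≠ kk) :
    GElt k Nt n kk kk j
      = ∑ p ∈ Finset.Icc kk (kk + n - 1), ftGen k Nt p (sigmaIdx n kk j) := by
  unfold GElt EIdx
  rw [if_pos rfl, if_neg hj]
  exact Finset.sum_congr rfl fun p _ => Finset.sum_singleton _ _

lemma Grow' {j : ℕ} (hj : j ≠ kk) :
    GElt k Nt n kk j kk
      = ∑ q ∈ Finset.Icc kk (kk + n - 1), ftGen k Nt (sigmaIdx n kk j) q := by
  unfold GElt EIdx
  rw [if_neg hj, if_pos rfl, Finset.sum_singleton]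

lemma Gcol {j : ℕ} (hj : j ≠ kk) :
    GElt k Nt n kk j kk
      = ∑ q ∈ Finset.Icc kk (kk + n - 1), ftGen k Nt q (sigmaIdx n kk j) := by
  rw [Grow' k Nt hj]
  exact Finset.sum_congr rfl fun q _ => tsymm k Nt _ q

lemma DG [CharZero k] (hn : 1 ≤ n) {j l : ℕ} (h : ¬(j = kk ∧ l = kk)) :
    ⁅DElt k Nt n kk, GElt k Nt n kk j l⁆ = 0 := by
  by_cases hj : j = kk
  · have hl : l ≠ kk := fun hl => h ⟨hj, hl⟩
    subst hj
    rw [Grow k Nt hl]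
    exact DrowKill k Nt j (j + n - 1) _ (sigma_not_mem hn hl)
  · by_cases hl : l = kk
    · subst hl
      rw [Gcol k Nt hj]
      exact DrowKill k Nt l (l + n - 1) _ (sigma_not_mem hn hj)
    · rw [Gsingle k Nt hj hl]
      exact DKill k Nt kk (kk + n - 1) _ _
        (Or.inr ⟨sigma_not_mem hn hj, sigma_not_mem hn hl⟩)

lemma phiT [CharZero k] (hn : 1 ≤ n) (m : ℕ) (x : ℕ × ℕ) {c d : ℕ}
    (hc : c ∈ Finset.Icc kk (kk + n - 1)) (hd : d ∈ Finset.Icc kk (kk + n - 1)) :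
    ⁅phiF k Nt n kk m x, ftGen k Nt c d⁆ = 0 := by
  unfold phiF
  split_ifs with h1 h2
  · exact DKill k Nt kk (kk + n - 1) c d (Or.inl ⟨hc, hd⟩)
  · by_cases hx1 : x.1 = kk
    · have hx2 : x.2 ≠ kk := fun hx2 => h2 ⟨hx1, hx2⟩
      rw [← hx1, Grow k Nt (hx1 ▸ hx2)]
      rw [hx1]
      exact colKill k Nt _ c d _ hc hd (sigma_not_mem hn hx2)
    · by_cases hx2 : x.2 = kk
      · rw [← hx2, Gcol k Nt (hx2 ▸ hx1)]
        rw [hx2]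
        exact colKill k Nt _ c d _ hc hd (sigma_not_mem hn hx1)
      · rw [Gsingle k Nt hx1 hx2]
        have h1c : sigmaIdx n kk x.1 ≠ c := fun h => (sigma_not_mem hn hx1) (h ▸ hc)
        have h1d : sigmaIdx n kk x.1 ≠ d := fun h => (sigma_not_mem hn hx1) (h ▸ hd)
        have h2c : sigmaIdx n kk x.2 ≠ c := fun h => (sigma_not_mem hn hx2) (h ▸ hc)
        have h2d : sigmaIdx n kk x.2 ≠ d := fun h => (sigma_not_mem hn hx2) (h ▸ hd)
        rcases eq_or_ne (sigmaIdx n kk x.1) (sigmaIdx n kk x.2) with he | he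
        · rw [← he]
          exact trel5 k Nt _ c d
        · exact trel3 k Nt _ _ c d h1c h1d h2c h2d
  · rw [zero_lie]

end Comp2

section Ker

variable (k : Type) [Field k] (Nt : ℕ) {n kk : ℕ}

lemma phi_ker [CharZero k] (hn : 1 ≤ n) (m : ℕ) :
    ∀ x ∈ ftRels k m, (lift k (phiF k Nt n kk m)) x = 0 := by
  intro x hx
  rcases hx with ⟨i, j, rfl⟩ | ⟨i, j, hr, rfl⟩ | ⟨i, j, l, m', h1, h2, h3, h4, rfl⟩ |
    ⟨i, j, l, h1, h2, h3, rfl⟩ | ⟨i, j, l, rfl⟩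
  · rw [map_sub, lift_of_apply, lift_of_apply, sub_eq_zero]
    unfold phiF
    dsimp only
    split_ifs <;> first | rfl | exact GElt_symm k Nt _ _ | tauto
  · rw [lift_of_apply]
    unfold phiF
    dsimp only
    rw [if_neg hr]
  · rw [LieHom.map_lie, lift_of_apply, lift_of_apply]
    unfold phiF
    dsimp only
    by_cases ho1 : 1 ≤ i ∧ i ≤ m ∧ 1 ≤ j ∧ j ≤ m
    · by_cases ho2 : 1 ≤ l ∧ l ≤ m ∧ 1 ≤ m' ∧ m' ≤ m
      · rw [if_pos ho1, if_pos ho2]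
        by_cases hd1 : i = kk ∧ j = kk
        · by_cases hd2 : l = kk ∧ m' = kk
          · exact absurd (hd1.1.trans hd2.1.symm) h1
          · rw [if_pos hd1, if_neg hd2]
            exact DG k Nt hn hd2
        · by_cases hd2 : l = kk ∧ m' = kk
          · rw [if_neg hd1, if_pos hd2, ← lie_skew, DG k Nt hn hd1, neg_zero]
          · rw [if_neg hd1, if_neg hd2]
            exact GG3 k Nt hn h1 h2 h3 h4
      · rw [if_neg ho2, lie_zero]
    · rw [if_neg ho1, zero_lie]
  · rw [LieHom.map_lie, map_add, lift_of_apply, lift_of_apply, lift_of_apply]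
    unfold phiF
    dsimp only
    by_cases ho1 : 1 ≤ i ∧ i ≤ m ∧ 1 ≤ j ∧ j ≤ m
    · by_cases hol : 1 ≤ l ∧ l ≤ m
      · have ho2 : 1 ≤ l ∧ l ≤ m ∧ 1 ≤ i ∧ i ≤ m := ⟨hol.1, hol.2, ho1.1, ho1.2.1⟩
        have ho3 : 1 ≤ l ∧ l ≤ m ∧ 1 ≤ j ∧ j ≤ m := ⟨hol.1, hol.2, ho1.2.2⟩
        have hd1 : ¬(i = kk ∧ j = kk) := fun hc => h1 (hc.1.trans hc.2.symm)
        have hd2 : ¬(l = kk ∧ i = kk) := fun hc => h3 (hc.2.trans hc.1.symm)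
        have hd3 : ¬(l = kk ∧ j = kk) := fun hc => h2 (hc.2.trans hc.1.symm)
        rw [if_pos ho1, if_pos ho2, if_pos ho3, if_neg hd1, if_neg hd2, if_neg hd3]
        exact G4 k Nt hn h1 h2 h3
      · have hno2 : ¬(1 ≤ l ∧ l ≤ m ∧ 1 ≤ i ∧ i ≤ m) := fun hc => hol ⟨hc.1, hc.2.1⟩
        have hno3 : ¬(1 ≤ l ∧ l ≤ m ∧ 1 ≤ j ∧ j ≤ m) := fun hc => hol ⟨hc.1, hc.2.1⟩
        rw [if_neg hno2, if_neg hno3, add_zero, lie_zero]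
    · rw [if_neg ho1, zero_lie]
  · rw [LieHom.map_lie, lift_of_apply, lift_of_apply]
    unfold phiF
    dsimp only
    by_cases ho1 : 1 ≤ i ∧ i ≤ m ∧ 1 ≤ i ∧ i ≤ m
    · by_cases ho2 : 1 ≤ j ∧ j ≤ m ∧ 1 ≤ l ∧ l ≤ m
      · rw [if_pos ho1, if_pos ho2]
        by_cases hi : i = kk
        · rw [if_pos ⟨hi, hi⟩]
          by_cases hd2 : j = kk ∧ l = kk
          · rw [if_pos hd2, lie_self]
          · rw [if_neg hd2]
            exact DG k Nt hn hd2
        · rw [if_neg (fun hc => hi hc.1)]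
          by_cases hd2 : j = kk ∧ l = kk
          · rw [if_pos hd2, Gsingle k Nt hi hi, ← lie_skew]
            have h0 : ⁅DElt k Nt n kk, ftGen k Nt (sigmaIdx n kk i) (sigmaIdx n kk i)⁆ = 0 :=
              DKill k Nt kk (kk + n - 1) _ _
                (Or.inr ⟨sigma_not_mem hn hi, sigma_not_mem hn hi⟩)
            rw [h0, neg_zero]
          · rw [if_neg hd2, Gsingle k Nt hi hi]
            unfold GElt
            rw [lie_sum']
            refine Finset.sum_eq_zero fun p hp => ?_
            rw [lie_sum']
            exact Finset.sum_eq_zero fun q hq => trel5 k Nt _ p q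
      · rw [if_neg ho2, lie_zero]
    · rw [if_neg ho1, zero_lie]

lemma psi_ker (hk1 : 1 ≤ kk) (n' : ℕ) :
    ∀ x ∈ ftRels k n', (lift k (psiF k Nt kk n')) x = 0 := by
  intro x hx
  rcases hx with ⟨i, j, rfl⟩ | ⟨i, j, hr, rfl⟩ | ⟨i, j, l, m', h1, h2, h3, h4, rfl⟩ |
    ⟨i, j, l, h1, h2, h3, rfl⟩ | ⟨i, j, l, rfl⟩
  · rw [map_sub, lift_of_apply, lift_of_apply, sub_eq_zero]
    unfold psiF
    dsimp only
    split_ifs <;> first | rfl | exact tsymm k Nt _ _ | tauto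
  · rw [lift_of_apply]
    unfold psiF
    dsimp only
    rw [if_neg hr]
  · rw [LieHom.map_lie, lift_of_apply, lift_of_apply]
    unfold psiF
    dsimp only
    by_cases ho1 : 1 ≤ i ∧ i ≤ n' ∧ 1 ≤ j ∧ j ≤ n'
    · by_cases ho2 : 1 ≤ l ∧ l ≤ n' ∧ 1 ≤ m' ∧ m' ≤ n'
      · rw [if_pos ho1, if_pos ho2]
        exact trel3 k Nt _ _ _ _ (by omega) (by omega) (by omega) (by omega)
      · rw [if_neg ho2, lie_zero]
    · rw [if_neg ho1, zero_lie]
  · rw [LieHom.map_lie, map_add, lift_of_apply, lift_of_apply, lift_of_apply]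
    unfold psiF
    dsimp only
    by_cases ho1 : 1 ≤ i ∧ i ≤ n' ∧ 1 ≤ j ∧ j ≤ n'
    · by_cases hol : 1 ≤ l ∧ l ≤ n'
      · have ho2 : 1 ≤ l ∧ l ≤ n' ∧ 1 ≤ i ∧ i ≤ n' := ⟨hol.1, hol.2, ho1.1, ho1.2.1⟩
        have ho3 : 1 ≤ l ∧ l ≤ n' ∧ 1 ≤ j ∧ j ≤ n' := ⟨hol.1, hol.2, ho1.2.2⟩
        rw [if_pos ho1, if_pos ho2, if_pos ho3]
        exact trel4 k Nt _ _ _ (by omega) (by omega) (by omega)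
      · have hno2 : ¬(1 ≤ l ∧ l ≤ n' ∧ 1 ≤ i ∧ i ≤ n') := fun hc => hol ⟨hc.1, hc.2.1⟩
        have hno3 : ¬(1 ≤ l ∧ l ≤ n' ∧ 1 ≤ j ∧ j ≤ n') := fun hc => hol ⟨hc.1, hc.2.1⟩
        rw [if_neg hno2, if_neg hno3, add_zero, lie_zero]
    · rw [if_neg ho1, zero_lie]
  · rw [LieHom.map_lie, lift_of_apply, lift_of_apply]
    unfold psiF
    dsimp only
    by_cases ho1 : 1 ≤ i ∧ i ≤ n' ∧ 1 ≤ i ∧ i ≤ n'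
    · by_cases ho2 : 1 ≤ j ∧ j ≤ n' ∧ 1 ≤ l ∧ l ≤ n'
      · rw [if_pos ho1, if_pos ho2]
        exact trel5 k Nt _ _ _
      · rw [if_neg ho2, lie_zero]
    · rw [if_neg ho1, zero_lie]

lemma commGen [CharZero k] (hn : 1 ≤ n) (hk1 : 1 ≤ kk) (m n' : ℕ) (hn' : n' ≤ n)
    (x y : ℕ × ℕ) :
    ⁅phiF k Nt n kk m x, psiF k Nt kk n' y⁆ = 0 := by
  unfold psiF
  by_cases hry : 1 ≤ y.1 ∧ y.1 ≤ n' ∧ 1 ≤ y.2 ∧ y.2 ≤ n'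
  · rw [if_pos hry]
    exact phiT k Nt hn m x (Finset.mem_Icc.mpr (by omega)) (Finset.mem_Icc.mpr (by omega))
  · rw [if_neg hry, lie_zero]

end Ker

lemma mem_centL {k : Type} [Field k] {L : Type} [LieRing L] [LieAlgebra k L] (z w : L) :
    w ∈ centL (k := k) z ↔ ⁅z, w⁆ = 0 := Iff.rfl

lemma mem_centR {k : Type} [Field k] {L : Type} [LieRing L] [LieAlgebra k L] (z w : L) :
    w ∈ centR (k := k) z ↔ ⁅w, z⁆ = 0 := Iff.rfl

/-- The operadic partial composition `∘ₖ : 𝔣𝔱ₘ ⊕ 𝔣𝔱ₙ → 𝔣𝔱_{m+n−1}` of the operad of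
framed Drinfeld–Kohno Lie algebras: the stated substitution formulas on the generators
(in particular `t_{ii} ∘ₖ 0 = t_{ii}` for `k > i`, `t_{ii} ∘ₖ 0 = t_{i+n−1,i+n−1}` for
`k < i`, and `t_{ii} ∘ᵢ 0 = Σ_{p=i}^{i+n−1} t_{pp} + Σ_{i ≤ p < q ≤ i+n−1} t_{pq}`)
define Lie algebra homomorphisms out of the two summands, with commuting images,
respecting the defining relations of 𝔣𝔱. -/
theorem ft_operad_composition
    (k : Type) [Field k] [CharZero k]
    (m n kk : ℕ) (hm : 1 ≤ m) (hn : 1 ≤ n) (hk1 : 1 ≤ kk) (hk2 : kk ≤ m) :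
    ∃ (f : ft k m →ₗ⁅k⁆ ft k (m + n - 1)) (g : ft k n →ₗ⁅k⁆ ft k (m + n - 1)),
      (∀ x y, ⁅f x, g y⁆ = (0 : ft k (m + n - 1))) ∧
      (∀ i j : ℕ, 1 ≤ i → i ≤ n → 1 ≤ j → j ≤ n →
        g (ftGen k n i j) = ftGen k (m + n - 1) (i + kk - 1) (j + kk - 1)) ∧
      (∀ i j : ℕ, 1 ≤ i → i < j → j ≤ m →
        (kk < i → f (ftGen k m i j) = ftGen k (m + n - 1) (i + n - 1) (j + n - 1)) ∧
        (kk = i → f (ftGen k m i j) =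
            ∑ p ∈ Finset.Icc i (i + n - 1), ftGen k (m + n - 1) p (j + n - 1)) ∧
        (i < kk → kk < j → f (ftGen k m i j) = ftGen k (m + n - 1) i (j + n - 1)) ∧
        (kk = j → f (ftGen k m i j) =
            ∑ q ∈ Finset.Icc j (j + n - 1), ftGen k (m + n - 1) i q) ∧
        (j < kk → f (ftGen k m i j) = ftGen k (m + n - 1) i j)) ∧
      (∀ i : ℕ, 1 ≤ i → i ≤ m →
        (kk < i → f (ftGen k m i i) = ftGen k (m + n - 1) (i + n - 1) (i + n - 1)) ∧
        (kk = i → f (ftGen k m i i) =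
            ∑ p ∈ Finset.Icc i (i + n - 1), ftGen k (m + n - 1) p p +
            ∑ p ∈ Finset.Icc i (i + n - 1), ∑ q ∈ Finset.Ioc p (i + n - 1),
              ftGen k (m + n - 1) p q) ∧
        (i < kk → f (ftGen k m i i) = ftGen k (m + n - 1) i i)) := by
  have hker_f : ∀ x ∈ ftIdeal k m, (lift k (phiF k (m + n - 1) n kk m)) x = 0 := by
    have hle : ftIdeal k m ≤ (lift k (phiF k (m + n - 1) n kk m)).ker :=
      (LieSubmodule.lieSpan_le).mpr
        (fun y hy => LieHom.mem_ker.mpr (phi_ker k (m + n - 1) hn m y hy))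
    exact fun x hx => LieHom.mem_ker.mp (hle hx)
  have hker_g : ∀ x ∈ ftIdeal k n, (lift k (psiF k (m + n - 1) kk n)) x = 0 := by
    have hle : ftIdeal k n ≤ (lift k (psiF k (m + n - 1) kk n)).ker :=
      (LieSubmodule.lieSpan_le).mpr
        (fun y hy => LieHom.mem_ker.mpr (psi_ker k (m + n - 1) hk1 n y hy))
    exact fun x hx => LieHom.mem_ker.mp (hle hx)
  refine ⟨lieQLift _ _ hker_f, lieQLift _ _ hker_g, ?_, ?_, ?_, ?_⟩
  · -- commuting images
    intro x y
    obtain ⟨u, rfl⟩ := LieSubmodule.Quotient.surjective_mk' (ftIdeal k m) x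
    obtain ⟨v, rfl⟩ := LieSubmodule.Quotient.surjective_mk' (ftIdeal k n) y
    rw [lieQLift_mk, lieQLift_mk]
    have step1 : ∀ z : ℕ × ℕ,
        ⁅phiF k (m + n - 1) n kk m z, lift k (psiF k (m + n - 1) kk n) v⁆ = 0 := fun z =>
      (mem_centL _ _).mp
        (lift_mem_lieSubalgebra (centL (phiF k (m + n - 1) n kk m z)) _
          (fun y => (mem_centL _ _).mpr (commGen k (m + n - 1) hn hk1 m n le_rfl z y)) v)
    exact (mem_centR _ _).mp
      (lift_mem_lieSubalgebra (centR (lift k (psiF k (m + n - 1) kk n) v)) _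
        (fun z => (mem_centR _ _).mpr (step1 z)) u)
  · -- values of g
    intro i j h1 h2 h3 h4
    unfold ftGen
    rw [lieQLift_mk, lift_of_apply]
    unfold psiF
    rw [if_pos (⟨h1, h2, h3, h4⟩ : 1 ≤ (i, j).1 ∧ (i, j).1 ≤ n ∧ 1 ≤ (i, j).2 ∧ (i, j).2 ≤ n)]
    rfl
  · -- values of f, off-diagonal
    intro i j h1 h2 h3
    have hval : (lieQLift _ _ hker_f) (ftGen k m i j)
        = phiF k (m + n - 1) n kk m (i, j) := by
      unfold ftGen
      rw [lieQLift_mk, lift_of_apply]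
    have hrange : 1 ≤ (i, j).1 ∧ (i, j).1 ≤ m ∧ 1 ≤ (i, j).2 ∧ (i, j).2 ≤ m :=
      ⟨h1, by omega, by omega, h3⟩
    have hnd : ¬((i, j).1 = kk ∧ (i, j).2 = kk) := by
      simp only []; omega
    refine ⟨?_, ?_, ?_, ?_, ?_⟩
    · intro hki
      rw [hval]
      unfold phiF
      rw [if_pos hrange, if_neg hnd,
        Gsingle k (m + n - 1) (by simp only []; omega) (by simp only []; omega)]
      rw [sigma_ge (by simp only []; omega), sigma_ge (by simp only []; omega)]
    · intro hki
      subst hki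
      rw [hval]
      unfold phiF
      rw [if_pos hrange, if_neg hnd, Grow k (m + n - 1) (show (kk, j).2 ≠ kk by simp only []; omega)]
      simp only [show sigmaIdx n kk j = j + n - 1 from sigma_ge (by omega)]
    · intro hik hkj
      rw [hval]
      unfold phiF
      rw [if_pos hrange, if_neg hnd,
        Gsingle k (m + n - 1) (by simp only []; omega) (by simp only []; omega)]
      rw [sigma_lt (by simp only []; omega), sigma_ge (by simp only []; omega)]
    · intro hkj
      subst hkj
      rw [hval]
      unfold phiF
      rw [if_pos hrange, if_neg hnd, Grow' k (m + n - 1) (show (i, kk).1 ≠ kk by simp only []; omega)]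
      simp only [show sigmaIdx n kk i = i from sigma_lt (by omega)]
    · intro hjk
      rw [hval]
      unfold phiF
      rw [if_pos hrange, if_neg hnd,
        Gsingle k (m + n - 1) (by simp only []; omega) (by simp only []; omega)]
      rw [sigma_lt (by simp only []; omega), sigma_lt (by simp only []; omega)]
  · -- values of f, diagonal
    intro i h1 h2
    have hval : (lieQLift _ _ hker_f) (ftGen k m i i)
        = phiF k (m + n - 1) n kk m (i, i) := by
      unfold ftGen
      rw [lieQLift_mk, lift_of_apply]
    have hrange : 1 ≤ (i, i).1 ∧ (i, i).1 ≤ m ∧ 1 ≤ (i, i).2 ∧ (i, i).2 ≤ m :=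
      ⟨h1, h2, h1, h2⟩
    refine ⟨?_, ?_, ?_⟩
    · intro hki
      rw [hval]
      unfold phiF
      rw [if_pos hrange, if_neg (show ¬((i, i).1 = kk ∧ (i, i).2 = kk) by simp only []; omega),
        Gsingle k (m + n - 1) (by simp only []; omega) (by simp only []; omega)]
      rw [sigma_ge (by simp only []; omega)]
    · intro hki
      subst hki
      rw [hval]
      unfold phiF
      rw [if_pos hrange, if_pos ⟨rfl, rfl⟩]
      rfl
    · intro hik
      rw [hval]
      unfold phiF
      rw [if_pos hrange, if_neg (show ¬((i, i).1 = kk ∧ (i, i).2 = kk) by simp only []; omega),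
        Gsingle k (m + n - 1) (by simp only []; omega) (by simp only []; omega)]
      rw [sigma_lt (by simp only []; omega)]
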